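/- Let u be a run with a liberally atomic set of valid blocks 𝔹 inducing ≺_𝔹 and its saturation ⪻_𝔹. Then: (1) a run is a proper linearization of ≺_𝔹 if and only if it is a proper linearization of ⪻_𝔹; (2) if a run u' is a proper linearization of ≺_𝔹 (equivalently of ⪻_𝔹) and v ≡_M u', then v is a proper linearization of ⪻_𝔹. -/

import Mathlib

namespace TraceTheory

inductive Op : Type
  | rd : Op
  | wr : Op
deriving DecidableEq

structure Lbl (T X : Type) : Type where
  thread : T
  op : Op
  var : X
deriving DecidableEq

/-- A concurrent program run: a finite string over the concurrent alphabet. -/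
abbrev Run (T X : Type) := List (Lbl T X)

/-- An event of a run: a symbol together with its occurrence number. -/
abbrev Event (T X : Type) := Lbl T X × ℕ

variable {T X : Type} [DecidableEq T] [DecidableEq X]

/-- Dependence: same thread, or same variable with at least one write. -/
def Dep (a b : Lbl T X) : Prop :=
  a.thread = b.thread ∨ (a.var = b.var ∧ (a.op = Op.wr ∨ b.op = Op.wr))

/-- The event at position `i` of run `w`. -/
def evAt (w : Run T X) (i : Fin w.length) : Event T X :=
  (w.get i, (w.take (i : ℕ)).count (w.get i))

def HasEv (w : Run T X) (e : Event T X) : Prop := ∃ i : Fin w.length, evAt w i = e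

/-- `e` occurs (strictly) before `f` in `w`. -/
def EvBefore (w : Run T X) (e f : Event T X) : Prop :=
  ∃ i j : Fin w.length, (i : ℕ) < (j : ℕ) ∧ evAt w i = e ∧ evAt w j = f

/-- Program order. -/
def po (w : Run T X) (e f : Event T X) : Prop :=
  e.1.thread = f.1.thread ∧ EvBefore w e f

/-- Reads-from: `f` is a read that observes the write `e` (the last write on
the same variable before `f`). -/
def rf (w : Run T X) (e f : Event T X) : Prop :=
  e.1.op = Op.wr ∧ f.1.op = Op.rd ∧ e.1.var = f.1.var ∧
  ∃ i j : Fin w.length, evAt w i = e ∧ evAt w j = f ∧ (i : ℕ) < (j : ℕ) ∧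
    ∀ k : Fin w.length, (i : ℕ) < (k : ℕ) → (k : ℕ) < (j : ℕ) →
      ¬ ((w.get k).op = Op.wr ∧ (w.get k).var = f.1.var)

/-- Every read is preceded by a write on the same variable. -/
def WellFormed (w : Run T X) : Prop :=
  ∀ j : Fin w.length, (w.get j).op = Op.rd →
    ∃ i : Fin w.length, (i : ℕ) < (j : ℕ) ∧ (w.get i).op = Op.wr ∧
      (w.get i).var = (w.get j).var

/-- Reads-from equivalence. -/
def RfEquiv (w w' : Run T X) : Prop :=
  w.Perm w' ∧ po w = po w' ∧ rf w = rf w'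

/-- A single Mazurkiewicz swap of two adjacent independent symbols. -/
inductive MazSwap : Run T X → Run T X → Prop
  | swap (u v : Run T X) (a b : Lbl T X) (h : ¬ Dep a b) :
      MazSwap (u ++ a :: b :: v) (u ++ b :: a :: v)

/-- Trace (Mazurkiewicz) equivalence: the smallest equivalence closed under swaps. -/
def MazEquiv (w w' : Run T X) : Prop := Relation.EqvGen MazSwap w w'

/-- The trace (happens-before) partial order of a run. -/
def MazOrder (w : Run T X) : Event T X → Event T X → Prop :=
  Relation.TransGen (fun e f => EvBefore w e f ∧ Dep e.1 f.1)

/-- `B` is a block word (one write followed by reads of the same variable) that is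
valid as a contiguous segment whose suffix (remainder of the run) is `s`:
no read after the block reads from the block's write. -/
def ValidBlockSeg (B s : Run T X) : Prop :=
  ∃ a rest, B = a :: rest ∧ a.op = Op.wr ∧
    (∀ b ∈ rest, b.op = Op.rd ∧ b.var = a.var) ∧
    ∀ j : Fin s.length, (s.get j).op = Op.rd → (s.get j).var = a.var →
      ∃ m : Fin s.length, (m : ℕ) < (j : ℕ) ∧ (s.get m).op = Op.wr ∧
        (s.get m).var = a.var

def ThreadsDisjoint (B B' : Run T X) : Prop :=
  ∀ a ∈ B, ∀ b ∈ B', a.thread ≠ b.thread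

/-- A single block-equivalence step (clause (i): block swap, clause (ii): event swap). -/
inductive BlkSwap : Run T X → Run T X → Prop
  | block (p B B' s : Run T X) (hB : ValidBlockSeg B (B' ++ s)) (hB' : ValidBlockSeg B' s)
      (hd : ThreadsDisjoint B B') :
      BlkSwap (p ++ B ++ B' ++ s) (p ++ B' ++ B ++ s)
  | single (p s : Run T X) (a b : Lbl T X) (ht : a.thread ≠ b.thread)
      (h : a.var ≠ b.var ∨ (a.op = Op.rd ∧ b.op = Op.rd)) :
      BlkSwap (p ++ a :: b :: s) (p ++ b :: a :: s)

/-- Block equivalence: smallest reflexive transitive relation closed under the swaps. -/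
def BlkEquiv : Run T X → Run T X → Prop := Relation.ReflTransGen BlkSwap

/-- The set of events of the segment `B` of a run, given the prefix `p` preceding it. -/
def segEvents (p B : Run T X) : Set (Event T X) :=
  { e | ∃ i : Fin B.length, e = (B.get i, ((p ++ B.take (i : ℕ)).count (B.get i))) }

/-- Block-equivalence steps where block swaps are restricted to blocks from `𝔹`. -/
inductive BlkSwapIn (𝔹 : Set (Set (Event T X))) : Run T X → Run T X → Prop
  | block (p B B' s : Run T X) (hB : ValidBlockSeg B (B' ++ s)) (hB' : ValidBlockSeg B' s)
      (hBmem : segEvents p B ∈ 𝔹) (hB'mem : segEvents (p ++ B) B' ∈ 𝔹)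
      (hd : ThreadsDisjoint B B') :
      BlkSwapIn 𝔹 (p ++ B ++ B' ++ s) (p ++ B' ++ B ++ s)
  | single (p s : Run T X) (a b : Lbl T X) (ht : a.thread ≠ b.thread)
      (h : a.var ≠ b.var ∨ (a.op = Op.rd ∧ b.op = Op.rd)) :
      BlkSwapIn 𝔹 (p ++ a :: b :: s) (p ++ b :: a :: s)

/-- Block equivalence restricted to the set of blocks `𝔹`. -/
def BlkEquivIn (𝔹 : Set (Set (Event T X))) : Run T X → Run T X → Prop :=
  Relation.ReflTransGen (BlkSwapIn 𝔹)

/-- A valid block of `w` (as a set of events): a write event together with exactly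
the reads of `w` that read from it. -/
def IsValidBlockOf (w : Run T X) (S : Set (Event T X)) : Prop :=
  ∃ e : Event T X, HasEv w e ∧ e.1.op = Op.wr ∧ S = insert e { f | rf w e f }

def ValidBlocks (w : Run T X) (𝔹 : Set (Set (Event T X))) : Prop :=
  ∀ S ∈ 𝔹, IsValidBlockOf w S

/-- Block `S` occurs as a contiguous subword of `u`. -/
def SerialIn (u : Run T X) (S : Set (Event T X)) : Prop :=
  ∃ p B s, u = p ++ B ++ s ∧ segEvents p B = S

/-- Liberal atomicity of a run `v` with respect to a set of blocks `𝔹`. -/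
def LiberallyAtomic (v : Run T X) (𝔹 : Set (Set (Event T X))) : Prop :=
  ∃ u, BlkEquivIn 𝔹 u v ∧ ∀ S ∈ 𝔹, SerialIn u S

/-- Conflict serializability of a run `v` with respect to a set of blocks `𝔹`. -/
def ConflictSerializable (v : Run T X) (𝔹 : Set (Set (Event T X))) : Prop :=
  ∃ u, MazEquiv u v ∧ ∀ S ∈ 𝔹, SerialIn u S

/-- The block-happens-before order `≺_𝔹`. -/
def Bhb (w : Run T X) (𝔹 : Set (Set (Event T X))) : Event T X → Event T X → Prop :=
  Relation.TransGen (fun e f =>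
    EvBefore w e f ∧ Dep e.1 f.1 ∧
    ¬ (e.1.thread ≠ f.1.thread ∧ ∃ B ∈ 𝔹, ∃ B' ∈ 𝔹, B ≠ B' ∧ e ∈ B ∧ f ∈ B'))

/-- The saturated order `⪻_𝔹` on events (`Sum.inl`) and blocks (`Sum.inr`). -/
inductive Sat (w : Run T X) (𝔹 : Set (Set (Event T X))) :
    (Event T X ⊕ Set (Event T X)) → (Event T X ⊕ Set (Event T X)) → Prop
  | base {e f : Event T X} : Bhb w 𝔹 e f → Sat w 𝔹 (Sum.inl e) (Sum.inl f)
  | toBlk {e f : Event T X} {B B' : Set (Event T X)} :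
      e.1.var = f.1.var → B ∈ 𝔹 → B' ∈ 𝔹 → e ∈ B → f ∈ B' → B ≠ B' →
      Sat w 𝔹 (Sum.inl e) (Sum.inl f) → Sat w 𝔹 (Sum.inr B) (Sum.inr B')
  | ofBlk {B B' : Set (Event T X)} {e f : Event T X} :
      Sat w 𝔹 (Sum.inr B) (Sum.inr B') → e ∈ B → f ∈ B' →
      Sat w 𝔹 (Sum.inl e) (Sum.inl f)

/-- The event part of the saturated order `⪻_𝔹`. -/
def SatEv (w : Run T X) (𝔹 : Set (Set (Event T X))) (e f : Event T X) : Prop :=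
  Sat w 𝔹 (Sum.inl e) (Sum.inl f)

def SameVarBlocks (B B' : Set (Event T X)) : Prop :=
  ∃ x : X, (∀ e ∈ B, e.1.var = x) ∧ (∀ e ∈ B', e.1.var = x)

/-- No two distinct blocks of `𝔹` on the same variable overlap in `v`. -/
def NoOverlap (v : Run T X) (𝔹 : Set (Set (Event T X))) : Prop :=
  ∀ B ∈ 𝔹, ∀ B' ∈ 𝔹, B ≠ B' → SameVarBlocks B B' →
    (∀ e ∈ B, ∀ f ∈ B', EvBefore v e f) ∨ (∀ e ∈ B, ∀ f ∈ B', EvBefore v f e)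

/-- `v` is a proper linearization (of the events of `w`) of the order `ord`. -/
def ProperLin (w : Run T X) (𝔹 : Set (Set (Event T X)))
    (ord : Event T X → Event T X → Prop) (v : Run T X) : Prop :=
  w.Perm v ∧ (∀ e f, ord e f → EvBefore v e f) ∧ NoOverlap v 𝔹


/-- `e` is causally ordered before `f` under reads-from equivalence:
`e` occurs before `f` in every reads-from equivalent run. -/
def CausOrd (w : Run T X) (e f : Event T X) : Prop :=
  ∀ w', RfEquiv w w' → EvBefore w' e f

/-- `e` and `f` are causally concurrent under reads-from equivalence. -/
def CausConc (w : Run T X) (e f : Event T X) : Prop :=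
  ¬ CausOrd w e f ∧ ¬ CausOrd w f e

/-! Events are compared through prefix counts: `e` precedes `f` in `w` iff some prefix of `w`
contains the occurrence `e` but not the occurrence `f`. In these terms, swapping two adjacent
independent letters only changes one prefix, so the order of dependent events is preserved by
trace equivalence.

A linearization that respects `≺_𝔹` and keeps same-variable blocks apart respects the saturation
rules as well: an edge between events of two such blocks forces the whole blocks into that order.
Trace equivalence keeps blocks apart: an event of an earlier block conflicts with the write of a
later block on the same variable, and the reads of that block follow its write in `≺_𝔹`. -/

lemma count_take_mono (w : Run T X) {i j : ℕ} (hij : i ≤ j) (a : Lbl T X) :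
    (w.take i).count a ≤ (w.take j).count a :=
  (List.take_isPrefix_take.2 (Or.inl hij)).count_le a

lemma count_take_le_count (w : Run T X) (i : ℕ) (a : Lbl T X) :
    (w.take i).count a ≤ w.count a :=
  (List.take_prefix i w).count_le a

lemma count_take_succ_get (w : Run T X) (i : Fin w.length) :
    (w.take (i + 1)).count (w.get i) = (w.take i).count (w.get i) + 1 := by
  rw [List.take_add_one, List.getElem?_eq_getElem i.isLt, List.count_append]
  simp

lemma exists_evAt_of_lt_count_take {w : Run T X} {e : Event T X} {k : ℕ}
    (h : e.2 < (w.take k).count e.1) : ∃ i : Fin w.length, (i : ℕ) < k ∧ evAt w i = e := by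
  have hex : ∃ k, e.2 < (w.take k).count e.1 := ⟨k, h⟩
  have hmk : Nat.find hex ≤ k := Nat.find_min' hex h
  have hm := Nat.find_spec hex
  obtain ⟨n, hn⟩ : ∃ n, Nat.find hex = n + 1 :=
    Nat.exists_eq_succ_of_ne_zero fun h0 => by rw [h0] at hm; simp at hm
  have hprev := Nat.find_min hex (show n < Nat.find hex by omega)
  rw [hn] at hm
  have hnw : n < w.length := by
    by_contra! hwn
    rw [List.take_of_length_le (by omega)] at hm
    rw [List.take_of_length_le hwn] at hprev
    exact hprev hm
  rw [List.take_add_one, List.getElem?_eq_getElem hnw, List.count_append] at hm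
  simp only [Option.toList_some, List.count_singleton, beq_iff_eq] at hm
  have hget : w[n] = e.1 := by
    by_contra hne
    rw [if_neg hne, add_zero] at hm
    exact hprev hm
  rw [if_pos hget] at hm
  refine ⟨⟨n, hnw⟩, show n < k by omega, Prod.ext hget ?_⟩
  change (w.take n).count w[n] = e.2
  rw [hget]
  omega

lemma evBefore_iff_exists_take {w : Run T X} {e f : Event T X} :
    EvBefore w e f ↔
      ∃ k, e.2 < (w.take k).count e.1 ∧ (w.take k).count f.1 ≤ f.2 ∧ f.2 < w.count f.1 := by
  constructor
  · rintro ⟨i, j, hij, rfl, rfl⟩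
    refine ⟨i + 1, ?_, ?_, ?_⟩
    · simp only [evAt, count_take_succ_get]; omega
    · exact count_take_mono w hij _
    · have := count_take_succ_get w j
      have := count_take_le_count w (j + 1) (w.get j)
      simp only [evAt]; omega
  · rintro ⟨k, he, hf, hfw⟩
    obtain ⟨i, hik, rfl⟩ := exists_evAt_of_lt_count_take he
    obtain ⟨j, -, rfl⟩ := exists_evAt_of_lt_count_take (w := w) (e := f) (k := w.length)
      (by rwa [List.take_length])
    refine ⟨i, j, lt_of_lt_of_le hik (not_lt.1 fun hjk => ?_), rfl, rfl⟩
    have h1 : (evAt w j).2 + 1 = (w.take (j + 1)).count (evAt w j).1 :=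
      (count_take_succ_get w j).symm
    have h2 := count_take_mono w (show (j : ℕ) + 1 ≤ k by omega) (evAt w j).1
    omega

lemma evBefore_trans {w : Run T X} {e f g : Event T X}
    (hef : EvBefore w e f) (hfg : EvBefore w f g) : EvBefore w e g := by
  rw [evBefore_iff_exists_take] at *
  obtain ⟨k, he, hf, -⟩ := hef
  obtain ⟨l, hf', hg, hgw⟩ := hfg
  have hkl : k ≤ l := by
    by_contra! hlk
    have := count_take_mono w hlk.le f.1
    omega
  exact ⟨k, he, (count_take_mono w hkl g.1).trans hg, hgw⟩

lemma evBefore_asymm {w : Run T X} {e f : Event T X}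
    (hef : EvBefore w e f) (hfe : EvBefore w f e) : False := by
  rw [evBefore_iff_exists_take] at *
  obtain ⟨k, he, hf, -⟩ := hef
  obtain ⟨l, hf', he', -⟩ := hfe
  rcases le_total k l with hkl | hlk
  · have := count_take_mono w hkl e.1; omega
  · have := count_take_mono w hlk f.1; omega

lemma evAt_injective (w : Run T X) : Function.Injective (evAt w) := by
  intro i j hij
  by_contra hne
  rcases lt_or_gt_of_ne (Fin.val_ne_of_ne hne) with h | h
  · exact evBefore_asymm ⟨i, j, h, rfl, hij.symm⟩ ⟨i, j, h, rfl, hij.symm⟩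
  · exact evBefore_asymm ⟨j, i, h, rfl, hij⟩ ⟨j, i, h, rfl, hij⟩

lemma count_take_swap (p s : Run T X) (a b c : Lbl T X) {k : ℕ} (hk : k ≠ p.length + 1) :
    ((p ++ a :: b :: s).take k).count c = ((p ++ b :: a :: s).take k).count c := by
  rw [List.take_append, List.take_append, List.count_append, List.count_append]
  rcases hm : k - p.length with _ | _ | m
  · rfl
  · omega
  · simp only [List.take_succ_cons, List.count_cons]
    omega

lemma evBefore_swap {p s : Run T X} {a b : Lbl T X} {e f : Event T X} (hab : ¬ Dep a b)
    (hef : Dep e.1 f.1) (h : EvBefore (p ++ a :: b :: s) e f) :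
    EvBefore (p ++ b :: a :: s) e f := by
  rw [evBefore_iff_exists_take] at *
  obtain ⟨k, he, hf, hfw⟩ := h
  have hcount : ∀ c, (p ++ a :: b :: s).count c = (p ++ b :: a :: s).count c := fun c => by
    simp only [List.count_append, List.count_cons]; omega
  rw [hcount] at hfw
  by_cases hk : k ≠ p.length + 1
  · exact ⟨k, by rwa [← count_take_swap _ _ _ _ _ hk], by rwa [← count_take_swap _ _ _ _ _ hk], hfw⟩
  -- `k` splits the run between `a` and `b`; in the swapped run split before `b` or after `a`.
  rw [not_not.1 hk, List.take_length_add_append] at he hf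
  simp only [List.take_succ_cons, List.take_zero, List.count_append, List.count_singleton,
    beq_iff_eq] at he hf
  by_cases he' : e.2 < p.count e.1
  · refine ⟨p.length, ?_, ?_, hfw⟩ <;> rw [List.take_left' rfl]
    · exact he'
    · omega
  by_cases hf' : (p ++ [b, a]).count f.1 ≤ f.2
  · refine ⟨p.length + 2, ?_, ?_, hfw⟩ <;> rw [List.take_length_add_append]
    · simp only [List.take_succ_cons, List.take_zero, List.count_append, List.count_cons,
        List.count_nil, beq_iff_eq]
      omega
    · simpa using hf'
  have hea : a = e.1 := by
    by_contra hne
    simp only [hne, if_false] at he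
    omega
  have hfb : b = f.1 := by
    by_contra hne
    simp only [List.count_append, List.count_cons, List.count_nil, beq_iff_eq, hne,
      if_false] at hf'
    omega
  exact (hab (hea ▸ hfb ▸ hef)).elim

lemma MazSwap.evBefore_iff {w w' : Run T X} (h : MazSwap w w') {e f : Event T X}
    (hef : Dep e.1 f.1) : EvBefore w e f ↔ EvBefore w' e f := by
  obtain ⟨p, s, a, b, hab⟩ := h
  exact ⟨evBefore_swap hab hef,
    evBefore_swap (fun hba => hab (hba.imp Eq.symm (And.imp Eq.symm Or.symm))) hef⟩

lemma MazEquiv.evBefore_iff {w w' : Run T X} (h : MazEquiv w w') {e f : Event T X}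
    (hef : Dep e.1 f.1) : EvBefore w e f ↔ EvBefore w' e f := by
  induction h with
  | rel _ _ h => exact h.evBefore_iff hef
  | refl => rfl
  | symm _ _ _ ih => exact ih.symm
  | trans _ _ _ _ _ ih ih' => exact ih.trans ih'

lemma rf_unique {w : Run T X} {e e' f : Event T X} (h : rf w e f) (h' : rf w e' f) :
    e = e' := by
  obtain ⟨hw, -, hv, i, j, rfl, hj, hij, hmid⟩ := h
  obtain ⟨hw', -, hv', i', j', rfl, hj', hij', hmid'⟩ := h'
  obtain rfl : j = j' := evAt_injective w (hj.trans hj'.symm)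
  rcases lt_trichotomy (i : ℕ) i' with hlt | heq | hgt
  · exact (hmid i' hlt hij' ⟨hw', hv'⟩).elim
  · rw [Fin.ext heq]
  · exact (hmid' i hgt hij ⟨hw, hv⟩).elim

lemma IsValidBlockOf.exists_var {w : Run T X} {S : Set (Event T X)} (hS : IsValidBlockOf w S) :
    ∃ x, ∀ e ∈ S, e.1.var = x := by
  obtain ⟨g, -, -, rfl⟩ := hS
  exact ⟨g.1.var, fun e he => he.elim (fun h => h ▸ rfl) fun hrf => hrf.2.2.1.symm⟩

lemma IsValidBlockOf.sameVarBlocks {w : Run T X} {B B' : Set (Event T X)} {e f : Event T X}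
    (hB : IsValidBlockOf w B) (hB' : IsValidBlockOf w B') (he : e ∈ B) (hf : f ∈ B')
    (hef : e.1.var = f.1.var) : SameVarBlocks B B' := by
  obtain ⟨x, hx⟩ := hB.exists_var
  obtain ⟨x', hx'⟩ := hB'.exists_var
  refine ⟨x, hx, fun g hg => ?_⟩
  rw [hx' g hg, ← hx' f hf, ← hef, hx e he]

lemma IsValidBlockOf.eq_of_rf {w : Run T X} {S S' : Set (Event T X)} {e f : Event T X}
    (hS : IsValidBlockOf w S) (hS' : IsValidBlockOf w S') (hrf : rf w e f) (he : e ∈ S)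
    (hf : f ∈ S') : S = S' := by
  obtain ⟨g, -, -, rfl⟩ := hS
  obtain ⟨g', -, hg', rfl⟩ := hS'
  obtain rfl : e = g := he.elim id fun hge => nomatch hrf.1.symm.trans hge.2.1
  obtain rfl : g' = e := hf.elim (fun h => nomatch hg'.symm.trans (h ▸ hrf.2.1 : g'.1.op = Op.rd))
    fun hg'f => rf_unique hg'f hrf
  rfl

lemma rf.bhb {u : Run T X} {𝔹 : Set (Set (Event T X))} {e f : Event T X}
    (hval : ValidBlocks u 𝔹) (hrf : rf u e f) : Bhb u 𝔹 e f := by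
  obtain ⟨hw, -, hv, i, j, hi, hj, hij, -⟩ := id hrf
  refine .single ⟨⟨i, j, hij, hi, hj⟩, Or.inr ⟨hv, Or.inl hw⟩, ?_⟩
  rintro ⟨-, B, hB, B', hB', hne, he, hf⟩
  exact hne ((hval B hB).eq_of_rf (hval B' hB') hrf he hf)

def SumBefore (v : Run T X) : Event T X ⊕ Set (Event T X) → Event T X ⊕ Set (Event T X) → Prop
  | .inl e, .inl f => EvBefore v e f
  | .inr B, .inr B' => ∀ e ∈ B, ∀ f ∈ B', EvBefore v e f
  | _, _ => False

lemma Sat.sumBefore {u v : Run T X} {𝔹 : Set (Set (Event T X))} (hval : ValidBlocks u 𝔹)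
    (hord : ∀ e f, Bhb u 𝔹 e f → EvBefore v e f) (hno : NoOverlap v 𝔹)
    {x y : Event T X ⊕ Set (Event T X)} (h : Sat u 𝔹 x y) : SumBefore v x y := by
  induction h with
  | base h => exact hord _ _ h
  | toBlk hvar hB hB' he hf hne _ ih =>
    refine (hno _ hB _ hB' hne ((hval _ hB).sameVarBlocks (hval _ hB') he hf hvar)).resolve_right
      fun hall => evBefore_asymm ih (hall _ he _ hf)
  | ofBlk _ he hf ih => exact ih _ he _ hf

lemma properLin_bhb_iff_properLin_satEv {u v : Run T X} {𝔹 : Set (Set (Event T X))}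
    (hval : ValidBlocks u 𝔹) : ProperLin u 𝔹 (Bhb u 𝔹) v ↔ ProperLin u 𝔹 (SatEv u 𝔹) v :=
  ⟨fun ⟨hperm, hord, hno⟩ => ⟨hperm, fun _ _ h => Sat.sumBefore hval hord hno h, hno⟩,
    fun ⟨hperm, hord, hno⟩ => ⟨hperm, fun _ _ h => hord _ _ (.base h), hno⟩⟩

lemma bhb_evBefore_of_mazEquiv {u u' v : Run T X} {𝔹 : Set (Set (Event T X))}
    (hmz : MazEquiv u' v) (hord : ∀ e f, Bhb u 𝔹 e f → EvBefore u' e f) :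
    ∀ e f, Bhb u 𝔹 e f → EvBefore v e f := by
  intro e f h
  induction h with
  | single hr => exact (hmz.evBefore_iff hr.2.1).1 (hord _ _ (.single hr))
  | tail _ hr ih => exact evBefore_trans ih ((hmz.evBefore_iff hr.2.1).1 (hord _ _ (.single hr)))

lemma block_evBefore_of_mazEquiv {u u' v : Run T X} {𝔹 : Set (Set (Event T X))}
    {B B' : Set (Event T X)} (hval : ValidBlocks u 𝔹) (hB' : B' ∈ 𝔹)
    (hvar : SameVarBlocks B B') (hmz : MazEquiv u' v)
    (hbhb : ∀ e f, Bhb u 𝔹 e f → EvBefore v e f) (hord : ∀ e ∈ B, ∀ f ∈ B', EvBefore u' e f) :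
    ∀ e ∈ B, ∀ f ∈ B', EvBefore v e f := by
  obtain ⟨x, hxB, hxB'⟩ := hvar
  obtain ⟨g, -, hg, rfl⟩ := hval B' hB'
  intro e he f hf
  have hdep : Dep e.1 g.1 := Or.inr ⟨(hxB e he).trans (hxB' g (.inl rfl)).symm, Or.inr hg⟩
  have heg : EvBefore v e g := (hmz.evBefore_iff hdep).1 (hord e he g (.inl rfl))
  rcases hf with rfl | hrf
  · exact heg
  · exact evBefore_trans heg (hbhb _ _ (hrf.bhb hval))

lemma NoOverlap.of_mazEquiv {u u' v : Run T X} {𝔹 : Set (Set (Event T X))}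
    (hval : ValidBlocks u 𝔹) (hmz : MazEquiv u' v)
    (hbhb : ∀ e f, Bhb u 𝔹 e f → EvBefore v e f) (hno : NoOverlap u' 𝔹) : NoOverlap v 𝔹 := by
  intro B hB B' hB' hne hvar
  refine (hno B hB B' hB' hne hvar).imp (block_evBefore_of_mazEquiv hval hB' hvar hmz hbhb)
    fun hall e he f hf => ?_
  obtain ⟨x, hxB, hxB'⟩ := hvar
  exact block_evBefore_of_mazEquiv hval hB ⟨x, hxB', hxB⟩ hmz hbhb
    (fun f hf e he => hall e he f hf) f hf e he

lemma ProperLin.of_mazEquiv {u u' v : Run T X} {𝔹 : Set (Set (Event T X))}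
    (hval : ValidBlocks u 𝔹) (h : ProperLin u 𝔹 (Bhb u 𝔹) u') (hmz : MazEquiv u' v) :
    ProperLin u 𝔹 (Bhb u 𝔹) v := by
  obtain ⟨hperm, hord, hno⟩ := h
  have hbhb := bhb_evBefore_of_mazEquiv hmz hord
  have hperm' : u'.Perm v := (Equivalence.eqvGen_iff (List.Perm.eqv _)).1 <|
    hmz.mono fun _ _ ⟨p, s, a, b, _⟩ => (List.Perm.swap b a s).append_left p
  exact ⟨hperm.trans hperm', hbhb, hno.of_mazEquiv hval hmz hbhb⟩

theorem proper_linearizations_of_saturation_general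
    (T X : Type) [DecidableEq T] [DecidableEq X]
    (u : Run T X) (𝔹 : Set (Set (Event T X)))
    (hval : ValidBlocks u 𝔹) :
    (∀ v : Run T X, ProperLin u 𝔹 (Bhb u 𝔹) v ↔ ProperLin u 𝔹 (SatEv u 𝔹) v) ∧
    (∀ u' v : Run T X, ProperLin u 𝔹 (Bhb u 𝔹) u' → MazEquiv u' v →
        ProperLin u 𝔹 (SatEv u 𝔹) v) :=
  ⟨fun _ => properLin_bhb_iff_properLin_satEv hval,
    fun _ _ h hmz => (properLin_bhb_iff_properLin_satEv hval).1 (h.of_mazEquiv hval hmz)⟩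

/-- (1) proper linearizations of `≺_𝔹` and of its saturation
`⪻_𝔹` coincide; (2) if `u'` is a proper linearization of `≺_𝔹` and `v ≡_M u'`,
then `v` is a proper linearization of `⪻_𝔹`. -/
theorem proper_linearizations_of_saturation
    (T X : Type) [DecidableEq T] [DecidableEq X]
    (u : Run T X) (𝔹 : Set (Set (Event T X)))
    (hval : ValidBlocks u 𝔹) (hla : LiberallyAtomic u 𝔹) :
    (∀ v : Run T X, ProperLin u 𝔹 (Bhb u 𝔹) v ↔ ProperLin u 𝔹 (SatEv u 𝔹) v) ∧
    (∀ u' v : Run T X, ProperLin u 𝔹 (Bhb u 𝔹) u' → MazEquiv u' v →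
        ProperLin u 𝔹 (SatEv u 𝔹) v) :=
  proper_linearizations_of_saturation_general T X u 𝔹 hval

end TraceTheory
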